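/- arXiv:2507.11234 — 2 statements merged into one kernel-verified Lean document; each statement's English description precedes it below -/
import Mathlib

section
/- Let p be a prime and let b : ℕ → ℤ_p be not identically zero with |b_j|_p → 0 as j → ∞. Set V = min_j v_p(b_j) and let j₀ be the largest index j with v_p(b_j) = V. Fix r ∈ ℕ and z ∈ ℤ_p, and for each j ∈ ℕ define c_j = p^{r j} · Σ_{i ≥ j} C(i, j) b_i z^{i−j} ∈ ℤ_p (these series converge; the c_j are the power series coefficients of h(x) = F(p^r x + z) where F(x) = Σ_j b_j x^j). Then v_p(c_{j₀}) = V + r·j₀; in particular min_j v_p(c_j) ≤ V + r·j₀. -/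
open Filter

/-- The additive `p`-adic valuation on `ℚ_p`, with values in `WithTop ℤ` (`v_p 0 = ∞`). -/
noncomputable def vP (p : ℕ) [Fact p.Prime] (x : ℚ_[p]) : WithTop ℤ :=
  Padic.addValuation x

/-!
Write `c_{j₀} = p^{r j₀} S` with `S = Σ_i C(j₀+i, j₀) b_{j₀+i} z^i`. The term `i = 0` of `S` is
`b_{j₀}`, and every later term has norm at most `‖b_{j₀+i}‖ ≤ ‖b_{j₀}‖ / p`, because `j₀` is the
last index of minimal valuation and binomial coefficients and powers of `z` have norm `≤ 1`.
By the ultrametric inequality `‖S‖ = ‖b_{j₀}‖`, so `v_p(S) = V` and `v_p(c_{j₀}) = V + r j₀`.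
-/

open Topology

lemma IsUltrametricDist.norm_add_tsum_eq {E ι : Type*} [SeminormedAddCommGroup E]
    [IsUltrametricDist E] [Nonempty ι] {x : E} {f : ι → E} {C : ℝ} (hC : C < ‖x‖)
    (hf : ∀ i, ‖f i‖ ≤ C) : ‖x + ∑' i, f i‖ = ‖x‖ := by
  have htail : ‖∑' i, f i‖ < ‖x‖ := (norm_tsum_le_of_forall_le hf).trans_lt hC
  rw [norm_add_eq_max_of_norm_ne_norm htail.ne', max_eq_left htail.le]

section vP

variable {p : ℕ} [Fact p.Prime]

lemma vP_mul (x y : ℚ_[p]) : vP p (x * y) = vP p x + vP p y :=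
  Padic.addValuation.map_mul x y

lemma vP_natCast_pow (n : ℕ) : vP p ((p : ℚ_[p]) ^ n) = n := by
  have hp : (p : ℚ_[p]) ≠ 0 := by exact_mod_cast (Fact.out : p.Prime).ne_zero
  simp [vP, hp]

lemma vP_eq_of_norm_eq {x y : ℚ_[p]} (h : ‖x‖ = ‖y‖) : vP p x = vP p y := by
  rcases eq_or_ne x 0 with rfl | hx
  · rw [norm_zero, eq_comm, norm_eq_zero] at h
    rw [h]
  have hy : y ≠ 0 := by rwa [← norm_ne_zero_iff, ← h, norm_ne_zero_iff]
  have hp : (1 : ℝ) < p := by exact_mod_cast (Fact.out : p.Prime).one_lt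
  rw [Padic.norm_eq_zpow_neg_valuation hx, Padic.norm_eq_zpow_neg_valuation hy,
    zpow_right_inj₀ (by positivity) hp.ne', neg_inj] at h
  simp [vP, hx, hy, h]

lemma ne_zero_of_vP_lt {x y : ℚ_[p]} (h : vP p x < vP p y) : x ≠ 0 := by
  rintro rfl
  simp [vP] at h

lemma norm_le_mul_inv_of_vP_lt {x y : ℚ_[p]} (h : vP p x < vP p y) : ‖y‖ ≤ ‖x‖ * (p : ℝ)⁻¹ := by
  have hx := ne_zero_of_vP_lt h
  rcases eq_or_ne y 0 with rfl | hy
  · rw [norm_zero]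
    positivity
  have hp : (1 : ℝ) < p := by exact_mod_cast (Fact.out : p.Prime).one_lt
  simp only [vP, Padic.addValuation.apply hx, Padic.addValuation.apply hy, WithTop.coe_lt_coe] at h
  rw [Padic.norm_eq_zpow_neg_valuation hx, Padic.norm_eq_zpow_neg_valuation hy, ← zpow_neg_one,
    ← zpow_add₀ (by positivity)]
  exact zpow_le_zpow_right₀ hp.le (by omega)

end vP

namespace PadicInt

variable {p : ℕ} [Fact p.Prime]

lemma norm_choose_mul_mul_pow_le (b : ℕ → ℤ_[p]) (z : ℤ_[p]) (j i : ℕ) :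
    ‖((j + i).choose j : ℤ_[p]) * b (j + i) * z ^ i‖ ≤ ‖b (j + i)‖ := by
  rw [norm_mul, norm_mul]
  calc ‖((j + i).choose j : ℤ_[p])‖ * ‖b (j + i)‖ * ‖z ^ i‖ ≤ 1 * ‖b (j + i)‖ * 1 := by
        gcongr <;> exact norm_le_one _
    _ = ‖b (j + i)‖ := by ring

lemma summable_choose_mul_mul_pow {b : ℕ → ℤ_[p]} (hb : Tendsto (fun j => ‖b j‖) atTop (𝓝 0))
    (z : ℤ_[p]) (j : ℕ) : Summable fun i => ((j + i).choose j : ℤ_[p]) * b (j + i) * z ^ i := by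
  refine NonarchimedeanAddGroup.summable_of_tendsto_cofinite_zero ?_
  rw [Nat.cofinite_eq_atTop, tendsto_zero_iff_norm_tendsto_zero]
  exact squeeze_zero (fun _ => norm_nonneg _) (norm_choose_mul_mul_pow_le b z j)
    (hb.comp (tendsto_atTop_mono (Nat.le_add_left · j) tendsto_id))

lemma norm_tsum_choose_mul_mul_pow_eq {b : ℕ → ℤ_[p]}
    (hb : Tendsto (fun j => ‖b j‖) atTop (𝓝 0)) (z : ℤ_[p]) {j₀ : ℕ} {C : ℝ}
    (hC : C < ‖b j₀‖) (hbC : ∀ j, j₀ < j → ‖b j‖ ≤ C) :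
    ‖∑' i, ((j₀ + i).choose j₀ : ℤ_[p]) * b (j₀ + i) * z ^ i‖ = ‖b j₀‖ := by
  rw [(summable_choose_mul_mul_pow hb z j₀).tsum_eq_zero_add]
  simp only [add_zero, Nat.choose_self, Nat.cast_one, one_mul, pow_zero, mul_one]
  exact IsUltrametricDist.norm_add_tsum_eq hC fun i =>
    (norm_choose_mul_mul_pow_le b z j₀ (i + 1)).trans (hbC _ (by omega))

end PadicInt

theorem substituted_series_coeff_valuation_general (p : ℕ) [hp : Fact p.Prime]
    (b : ℕ → ℤ_[p])
    (hb : Tendsto (fun j => ‖b j‖) atTop (nhds 0))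
    (j₀ : ℕ)
    (hj₀max : ∀ j : ℕ, j₀ < j → vP p (b j₀ : ℚ_[p]) < vP p (b j : ℚ_[p]))
    (r : ℕ) (z : ℤ_[p]) (c : ℕ → ℤ_[p])
    (hc : ∀ j : ℕ, c j = (p : ℤ_[p]) ^ (r * j) *
      ∑' i : ℕ, ((j + i).choose j : ℤ_[p]) * b (j + i) * z ^ i) :
    vP p (c j₀ : ℚ_[p]) = vP p (b j₀ : ℚ_[p]) + ((r * j₀ : ℤ) : WithTop ℤ) ∧
    ∃ j : ℕ, vP p (c j : ℚ_[p]) ≤ vP p (b j₀ : ℚ_[p]) + ((r * j₀ : ℤ) : WithTop ℤ) := by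
  have hb₀ : (b j₀ : ℚ_[p]) ≠ 0 := ne_zero_of_vP_lt (hj₀max _ j₀.lt_succ_self)
  have hp1 : (1 : ℝ) < p := by exact_mod_cast hp.out.one_lt
  have hS := PadicInt.norm_tsum_choose_mul_mul_pow_eq hb z
    (mul_lt_of_lt_one_right (norm_pos_iff.mpr hb₀ : 0 < ‖(b j₀ : ℚ_[p])‖)
      (inv_lt_one_of_one_lt₀ hp1)) fun j hj => norm_le_mul_inv_of_vP_lt (hj₀max j hj)
  have key : vP p (c j₀ : ℚ_[p]) = vP p (b j₀ : ℚ_[p]) + ((r * j₀ : ℤ) : WithTop ℤ) := by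
    rw [hc, PadicInt.coe_mul, PadicInt.coe_pow, PadicInt.coe_natCast, vP_mul, vP_natCast_pow,
      vP_eq_of_norm_eq hS, add_comm]
    norm_cast
  exact ⟨key, j₀, key.le⟩

/-- Let `b : ℕ → ℤ_p` be not identically zero with `|b_j|_p → 0`,
`V = min_j v_p(b_j)` attained last at `j₀`.  Fix `r ∈ ℕ` and `z ∈ ℤ_p`, and let
`c_j = p^{r j} ∑_{i ≥ j} C(i,j) b_i z^{i−j}` be the coefficients of `F(p^r x + z)`.
Then `v_p(c_{j₀}) = V + r j₀`; in particular `min_j v_p(c_j) ≤ V + r j₀`. -/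
theorem substituted_series_coeff_valuation (p : ℕ) [hp : Fact p.Prime]
    (b : ℕ → ℤ_[p]) (hb_ne : ∃ j, b j ≠ 0)
    (hb : Tendsto (fun j => ‖b j‖) atTop (nhds 0))
    (j₀ : ℕ) (hj₀min : ∀ j : ℕ, vP p (b j₀ : ℚ_[p]) ≤ vP p (b j : ℚ_[p]))
    (hj₀max : ∀ j : ℕ, j₀ < j → vP p (b j₀ : ℚ_[p]) < vP p (b j : ℚ_[p]))
    (r : ℕ) (z : ℤ_[p]) (c : ℕ → ℤ_[p])
    (hc : ∀ j : ℕ, c j = (p : ℤ_[p]) ^ (r * j) *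
      ∑' i : ℕ, ((j + i).choose j : ℤ_[p]) * b (j + i) * z ^ i) :
    vP p (c j₀ : ℚ_[p]) = vP p (b j₀ : ℚ_[p]) + ((r * j₀ : ℤ) : WithTop ℤ) ∧
    ∃ j : ℕ, vP p (c j : ℚ_[p]) ≤ vP p (b j₀ : ℚ_[p]) + ((r * j₀ : ℤ) : WithTop ℤ) :=
  substituted_series_coeff_valuation_general p (hp := hp) b hb j₀ hj₀max r z c hc
end

section
/- Let u : ℕ → ℤ satisfy an order-d integer linear recurrence u_{n+d} = a_{d-1} u_{n+d-1} + … + a_0 u_n, let p be a prime with p > d+1 and p ∤ a_0, let A be the companion matrix of the recurrence, and let M be a positive integer with A^M ≡ I (mod p). Then for every ℓ ∈ {0, …, M−1}, either u_{Mn+ℓ} = 0 for all n ∈ ℕ, or the set {n ∈ ℕ : u_{Mn+ℓ} = 0} has at most d − 1 elements. -/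
/-!
Write `A ^ M = 1 + p • B`. Then `u (M n + ℓ) = ∑ₖ C(n, k) pᵏ wₖ`, where `wₖ` is an entry of
`Bᵏ x` for the state vector `x` of `u` at time `ℓ`, and by Cayley–Hamilton every `wₖ` is an
integer combination of `w₀, …, w_{d-1}`. As `p > d + 1`, the numbers `pᵏ wₖ / k!` tend to `0`
`p`-adically, and for `k ≥ d` they are strictly smaller than the largest of the first `d` of them.
Expanding the falling factorials `k! C(n, k)` in powers of `n`, the map `n ↦ u (M n + ℓ)` becomes
the restriction to `ℕ` of a power series over `ℚ_p`, convergent on the closed unit ball, whose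
largest coefficient occurs last at an index `< d`; Strassmann's theorem bounds its zeros by `d - 1`.
-/

open Finset

/-- The companion matrix of the linear recurrence with coefficients `a_0, …, a_{d-1}`
(where `u_{n+d} = a_{d-1} u_{n+d-1} + … + a_0 u_n`): its first row is
`(a_{d-1}, …, a_1, a_0)`, its subdiagonal entries are `1` and all other entries are `0`. -/
def companionMatrix {d : ℕ} (a : Fin d → ℤ) : Matrix (Fin d) (Fin d) ℤ :=
  Matrix.of fun i j =>
    if (i : ℕ) = 0 then a j.rev else if (j : ℕ) + 1 = (i : ℕ) then 1 else 0


open Filter Topology Polynomial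
open scoped Nat

theorem tendsto_zero_of_norm_le_of_tail_le {E F : Type*} [SeminormedAddGroup E]
    [SeminormedAddGroup F] {f : ℕ → E} {g : ℕ → F} (hf : Tendsto f atTop (𝓝 0))
    (h : ∀ i {t : ℝ}, 0 ≤ t → (∀ j, i ≤ j → ‖f j‖ ≤ t) → ‖g i‖ ≤ t) :
    Tendsto g atTop (𝓝 0) := by
  refine Metric.tendsto_atTop.2 fun ε hε => ?_
  obtain ⟨J, hJ⟩ := Metric.tendsto_atTop.1 hf (ε / 2) (half_pos hε)
  refine ⟨J, fun i hi => ?_⟩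
  rw [dist_zero_right]
  refine (h i (half_pos hε).le fun j hj => ?_).trans_lt (half_lt_self hε)
  simpa using (hJ j (hi.trans hj)).le

section Ultrametric

variable {E : Type*} [NormedAddCommGroup E] [IsUltrametricDist E] [CompleteSpace E]

theorem summable_of_tendsto_atTop_zero {f : ℕ → E} (hf : Tendsto f atTop (𝓝 0)) : Summable f := by
  rwa [NonarchimedeanAddGroup.summable_iff_tendsto_cofinite_zero, Nat.cofinite_eq_atTop]

theorem tsum_comm_of_lower_triangular {F : ℕ → ℕ → E} {a : ℕ → ℝ}
    (ha : Tendsto a atTop (𝓝 0)) (hF : ∀ k j, ‖F k j‖ ≤ a k)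
    (hF0 : ∀ k j, k < j → F k j = 0) :
    ∑' k, ∑' j, F k j = ∑' j, ∑' k, F k j := by
  have hsum : Summable (Function.uncurry F) := by
    rw [NonarchimedeanAddGroup.summable_iff_tendsto_cofinite_zero, Metric.tendsto_nhds]
    intro ε hε
    obtain ⟨K, hK⟩ := (Metric.tendsto_atTop.1 ha) ε hε
    refine eventually_cofinite.2 (((range K) ×ˢ (range K) : Finset _).finite_toSet.subset ?_)
    rintro ⟨k, j⟩ hkj
    simp only [Set.mem_ofPred_eq, dist_zero_right, not_lt, Function.uncurry_apply_pair] at hkj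
    have hk : k < K := by
      by_contra! h
      have := hK k h
      rw [Real.dist_eq, sub_zero] at this
      linarith [hF k j, le_abs_self (a k)]
    have hj : j ≤ k := by
      by_contra! h
      rw [hF0 k j h, norm_zero] at hkj
      linarith
    simp only [coe_product, coe_range, Set.mem_prod, Set.mem_Iio]
    omega
  refine (hsum.tsum_comm' (fun k => summable_of_ne_finset_zero (s := range (k + 1)) ?_)
    (fun j => summable_of_tendsto_atTop_zero (squeeze_zero_norm (hF · j) ha))).symm
  intro j hj
  exact hF0 k j (by simpa using hj)

end Ultrametric

section PowerSeries

variable {K : Type*} [NormedField K] {c : ℕ → K} {x y : K}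

theorem norm_mul_pow_le (hx : ‖x‖ ≤ 1) (a : K) (j : ℕ) : ‖a * x ^ j‖ ≤ ‖a‖ := by
  rw [norm_mul, norm_pow]
  exact mul_le_of_le_one_right (norm_nonneg a) (pow_le_one₀ (norm_nonneg x) hx)

variable [IsUltrametricDist K]

theorem norm_tsum_mul_pow_le (hx : ‖x‖ ≤ 1) {s : ℝ} (hs : 0 ≤ s) (h : ∀ j, ‖c j‖ ≤ s) :
    ‖∑' j, c j * x ^ j‖ ≤ s :=
  IsUltrametricDist.norm_tsum_le_of_forall_le_of_nonneg hs
    fun j => (norm_mul_pow_le hx (c j) j).trans (h j)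

variable [CompleteSpace K]

theorem summable_mul_pow (hc : Tendsto c atTop (𝓝 0)) (hx : ‖x‖ ≤ 1) :
    Summable fun j => c j * x ^ j :=
  summable_of_tendsto_atTop_zero
    (squeeze_zero_norm (fun j => norm_mul_pow_le hx (c j) j) (tendsto_norm_zero.comp hc))

theorem norm_tsum_mul_pow_eq (hc : Tendsto c atTop (𝓝 0)) (hx : ‖x‖ ≤ 1) {s : ℝ}
    (hs : ∀ j, ‖c (j + 1)‖ ≤ s) (hs0 : s < ‖c 0‖) : ‖∑' j, c j * x ^ j‖ = ‖c 0‖ := by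
  have htail : ‖∑' j, c (j + 1) * x ^ (j + 1)‖ < ‖c 0‖ :=
    (IsUltrametricDist.norm_tsum_le_of_forall_le_of_nonneg ((norm_nonneg _).trans (hs 0))
      fun j => (norm_mul_pow_le hx _ _).trans (hs j)).trans_lt hs0
  rw [(summable_mul_pow hc hx).tsum_eq_zero_add, pow_zero, mul_one,
    IsUltrametricDist.norm_add_eq_max_of_norm_ne_norm htail.ne', max_eq_left htail.le]

theorem tsum_mul_pow_sub_tsum_mul_pow (hc : Tendsto c atTop (𝓝 0)) (hx : ‖x‖ ≤ 1)
    (hy : ‖y‖ ≤ 1) :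
    ∑' j, c j * y ^ j - ∑' j, c j * x ^ j
      = (y - x) * ∑' i, (∑' m, c (m + (i + 1)) * x ^ m) * y ^ i := by
  set F : ℕ → ℕ → K := fun j i => if i < j then c j * (y ^ i * x ^ (j - 1 - i)) else 0
  have hF : ∀ j i, ‖F j i‖ ≤ ‖c j‖ := by
    intro j i
    by_cases h : i < j
    · simp only [F, if_pos h, norm_mul, norm_pow]
      exact mul_le_of_le_one_right (norm_nonneg _) (mul_le_one₀ (pow_le_one₀ (norm_nonneg _) hy)
        (by positivity) (pow_le_one₀ (norm_nonneg _) hx))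
    · simp [F, h]
  have hrow : ∀ j, c j * y ^ j - c j * x ^ j = (y - x) * ∑' i, F j i := by
    intro j
    rw [tsum_eq_sum (s := range j) fun i hi => if_neg (by simpa using hi),
      sum_congr rfl fun i hi => if_pos (mem_range.1 hi), ← mul_sum]
    linear_combination (-c j) * geom_sum₂_mul y x j
  have hcol : ∀ i, ∑' j, F j i = (∑' m, c (m + (i + 1)) * x ^ m) * y ^ i := by
    intro i
    have hsum : Summable fun j => F j i :=
      summable_of_tendsto_atTop_zero (squeeze_zero_norm (hF · i) (tendsto_norm_zero.comp hc))
    rw [← hsum.sum_add_tsum_nat_add (i + 1), sum_eq_zero fun j hj => if_neg (by simpa using hj),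
      zero_add, ← tsum_mul_right]
    refine tsum_congr fun m => ?_
    simp only [F, if_pos (show i < m + (i + 1) by omega), show m + (i + 1) - 1 - i = m by omega]
    ring
  calc ∑' j, c j * y ^ j - ∑' j, c j * x ^ j = ∑' j, (c j * y ^ j - c j * x ^ j) :=
        ((summable_mul_pow hc hy).tsum_sub (summable_mul_pow hc hx)).symm
    _ = (y - x) * ∑' j, ∑' i, F j i := by rw [← tsum_mul_left]; exact tsum_congr hrow
    _ = _ := by
        rw [tsum_comm_of_lower_triangular (tendsto_norm_zero.comp hc) hF
          fun j i h => if_neg (by omega), tsum_congr hcol]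

variable (c) in
def zerosInClosedUnitBall : Set K := {x | ‖x‖ ≤ 1 ∧ ∑' j, c j * x ^ j = 0}

/-- Strassmann's theorem. -/
theorem encard_zerosInClosedUnitBall_le (N : ℕ) (hc : Tendsto c atTop (𝓝 0)) {s : ℝ}
    (hmax : ∀ j, ‖c j‖ ≤ ‖c N‖) (htail : ∀ j, N < j → ‖c j‖ ≤ s) (hs : s < ‖c N‖) :
    (zerosInClosedUnitBall c).encard ≤ N := by
  induction N generalizing c with
  | zero =>
    refine (Set.encard_eq_zero.2 (Set.eq_empty_of_forall_notMem fun x hx => ?_)).le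
    obtain ⟨hx, hx0⟩ := hx
    have := norm_tsum_mul_pow_eq hc hx (fun j => htail _ j.succ_pos) hs
    rw [hx0, norm_zero] at this
    linarith [norm_nonneg (c 1), htail 1 one_pos]
  | succ N ih =>
    rcases (zerosInClosedUnitBall c).eq_empty_or_nonempty with h | ⟨x, hx, hx0⟩
    · simp [h]
    set b : ℕ → K := fun i => ∑' m, c (m + (i + 1)) * x ^ m
    have hs0 : 0 ≤ s := (norm_nonneg _).trans (htail (N + 2) (by omega))
    have hb_le : ∀ i {t : ℝ}, 0 ≤ t → (∀ j, i < j → ‖c j‖ ≤ t) → ‖b i‖ ≤ t :=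
      fun i t ht h => norm_tsum_mul_pow_le hx ht fun m => h _ (by omega)
    have hb : Tendsto b atTop (𝓝 0) :=
      tendsto_zero_of_norm_le_of_tail_le hc fun i _ ht h => hb_le i ht fun j hj => h j hj.le
    have hbN : ‖b N‖ = ‖c (N + 1)‖ := by
      simpa using norm_tsum_mul_pow_eq (c := fun m => c (m + (N + 1)))
        (hc.comp (tendsto_add_atTop_nat (N + 1))) hx
        (fun j => htail (j + 1 + (N + 1)) (by omega)) (by simpa using hs)
    have hsub : zerosInClosedUnitBall c ⊆ insert x (zerosInClosedUnitBall b) := by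
      rintro y ⟨hy, hy0⟩
      rcases eq_or_ne y x with rfl | hyx
      · exact Set.mem_insert _ _
      have hfac := tsum_mul_pow_sub_tsum_mul_pow hc hx hy
      rw [hy0, hx0, sub_zero, eq_comm, mul_eq_zero, sub_eq_zero] at hfac
      exact Set.mem_insert_of_mem _ ⟨hy, hfac.resolve_left hyx⟩
    have hbZ : (zerosInClosedUnitBall b).encard ≤ N :=
      ih hb (fun i => hbN ▸ hb_le i (norm_nonneg _) fun j _ => hmax j)
        (fun i hi => hb_le i hs0 fun j hj => htail j (by omega)) (hbN ▸ hs)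
    calc (zerosInClosedUnitBall c).encard
        ≤ (insert x (zerosInClosedUnitBall b)).encard := Set.encard_le_encard hsub
      _ ≤ (zerosInClosedUnitBall b).encard + 1 := Set.encard_insert_le _ _
      _ ≤ N + 1 := by gcongr

end PowerSeries

section Interpolation

theorem norm_le_of_forall_norm_sum_choose_mul_le {R : Type*} [NormedRing R] [NormOneClass R]
    [IsUltrametricDist R] {t : ℕ → R} {s : ℝ}
    (h : ∀ n, ‖∑ k ∈ range (n + 1), (n.choose k : R) * t k‖ ≤ s) (n : ℕ) : ‖t n‖ ≤ s := by
  refine Nat.strong_induction_on n fun n ih => ?_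
  have hs : 0 ≤ s := (norm_nonneg _).trans (h 0)
  have hn : t n = ∑ k ∈ range (n + 1), (n.choose k : R) * t k
      + -∑ k ∈ range n, (n.choose k : R) * t k := by
    rw [sum_range_succ, Nat.choose_self]
    simp
  rw [hn]
  refine (IsUltrametricDist.norm_add_le_max _ _).trans (max_le (h n) ?_)
  rw [norm_neg]
  refine IsUltrametricDist.norm_sum_le_of_forall_le_of_nonneg hs fun k hk => ?_
  refine (norm_mul_le _ _).trans ?_
  exact (mul_le_of_le_one_left (norm_nonneg _) (IsUltrametricDist.norm_natCast_le_one R _)).trans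
    (ih k (mem_range.1 hk))

theorem tsum_div_factorial_mul_aeval_descPochhammer {K : Type*} [Field K] [TopologicalSpace K]
    [CharZero K] (t : ℕ → K) (n : ℕ) :
    ∑' k, t k / k ! * aeval (n : K) (descPochhammer ℤ k)
      = ∑ k ∈ range (n + 1), (n.choose k : K) * t k := by
  have haeval : ∀ k, aeval (n : K) (descPochhammer ℤ k) = (n.descFactorial k : K) := fun k => by
    rw [← descPochhammer_eval_eq_descFactorial, aeval_def, eval₂_eq_eval_map, descPochhammer_map]
  rw [tsum_eq_sum (s := range (n + 1)) fun k hk => by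
    rw [haeval, Nat.descFactorial_eq_zero_iff_lt.2 (by simpa using hk), Nat.cast_zero, mul_zero]]
  refine sum_congr rfl fun k _ => ?_
  have hk : (k ! : K) ≠ 0 := Nat.cast_ne_zero.2 k.factorial_ne_zero
  rw [haeval, Nat.descFactorial_eq_factorial_mul_choose, Nat.cast_mul]
  field_simp

variable {K : Type*} [NormedField K] [IsUltrametricDist K]

noncomputable def seriesCoeff (τ : ℕ → K) (P : ℕ → ℤ[X]) (j : ℕ) : K :=
  ∑' k, τ k * ((P k).coeff j : K)

variable {τ : ℕ → K} {P : ℕ → ℤ[X]}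

theorem norm_seriesCoeff_le (hP : ∀ k, (P k).natDegree ≤ k) {j : ℕ} {s : ℝ} (hs : 0 ≤ s)
    (hτ : ∀ k, j ≤ k → ‖τ k‖ ≤ s) : ‖seriesCoeff τ P j‖ ≤ s := by
  refine IsUltrametricDist.norm_tsum_le_of_forall_le_of_nonneg hs fun k => ?_
  rcases lt_or_ge k j with h | h
  · simpa [coeff_eq_zero_of_natDegree_lt ((hP k).trans_lt h)] using hs
  · rw [norm_mul]
    exact (mul_le_of_le_one_right (norm_nonneg _) (IsUltrametricDist.norm_intCast_le_one K _)).trans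
      (hτ k h)

theorem tendsto_seriesCoeff (hτ : Tendsto τ atTop (𝓝 0)) (hP : ∀ k, (P k).natDegree ≤ k) :
    Tendsto (seriesCoeff τ P) atTop (𝓝 0) :=
  tendsto_zero_of_norm_le_of_tail_le hτ fun _ _ ht h => norm_seriesCoeff_le hP ht h

theorem tsum_seriesCoeff_mul_pow [CompleteSpace K] (hτ : Tendsto τ atTop (𝓝 0))
    (hP : ∀ k, (P k).natDegree ≤ k) {y : K} (hy : ‖y‖ ≤ 1) :
    ∑' j, seriesCoeff τ P j * y ^ j = ∑' k, τ k * aeval y (P k) := by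
  have hzero : ∀ k j, k < j → τ k * ((P k).coeff j : K) * y ^ j = 0 := fun k j h => by
    simp [coeff_eq_zero_of_natDegree_lt ((hP k).trans_lt h)]
  have hbound : ∀ k j, ‖τ k * ((P k).coeff j : K) * y ^ j‖ ≤ ‖τ k‖ := fun k j => by
    refine (norm_mul_pow_le hy _ j).trans ?_
    rw [norm_mul]
    exact mul_le_of_le_one_right (norm_nonneg _) (IsUltrametricDist.norm_intCast_le_one K _)
  calc ∑' j, seriesCoeff τ P j * y ^ j = ∑' j, ∑' k, τ k * ((P k).coeff j : K) * y ^ j :=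
        tsum_congr fun j => tsum_mul_right.symm
    _ = ∑' k, ∑' j, τ k * ((P k).coeff j : K) * y ^ j :=
        (tsum_comm_of_lower_triangular (tendsto_norm_zero.comp hτ) hbound hzero).symm
    _ = ∑' k, τ k * aeval y (P k) := tsum_congr fun k => by
        rw [tsum_eq_sum (s := range (k + 1)) fun j hj => hzero k j (by simpa using hj),
          aeval_eq_sum_range' (Nat.lt_succ_of_le (hP k)), mul_sum]
        simp only [zsmul_eq_mul, mul_assoc]

end Interpolation

section Padic

variable {p : ℕ} [hp : Fact p.Prime]

theorem Padic.norm_le_norm_div_of_norm_lt {x y : ℚ_[p]} (h : ‖x‖ < ‖y‖) : ‖x‖ ≤ ‖y‖ / p := by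
  have hy : y ≠ 0 := by
    rintro rfl
    exact (norm_nonneg x).not_gt (by simpa using h)
  rw [Padic.norm_eq_zpow_neg_valuation hy] at h ⊢
  rw [div_eq_mul_inv, ← zpow_neg_one, ← zpow_add₀ (by exact_mod_cast hp.out.ne_zero)]
  exact (Padic.norm_le_pow_iff_norm_lt_pow_add_one x _).2 (by simpa using h)

theorem Padic.norm_factorial (k : ℕ) : ‖(k ! : ℚ_[p])‖ = (p : ℝ)⁻¹ ^ padicValNat p k ! := by
  rw [Padic.norm_eq_zpow_neg_valuation (by exact_mod_cast k.factorial_ne_zero),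
    Padic.valuation_natCast, zpow_neg, zpow_natCast, inv_pow]

theorem Padic.norm_pow_mul_div_factorial_le {m k : ℕ} {x : ℚ_[p]} {r : ℝ}
    (hx : ‖(p : ℚ_[p]) ^ m * x‖ ≤ r) (hk : m + padicValNat p k ! ≤ k) :
    ‖(p : ℚ_[p]) ^ k * x / (k ! : ℚ_[p])‖ ≤ (p : ℝ)⁻¹ ^ (k - m - padicValNat p k !) * r := by
  set v := padicValNat p k !
  have hρ : (0 : ℝ) < (p : ℝ)⁻¹ := by have := hp.out.pos; positivity
  have hsplit : (p : ℝ)⁻¹ ^ k = (p : ℝ)⁻¹ ^ (k - m - v) * (p : ℝ)⁻¹ ^ m * (p : ℝ)⁻¹ ^ v := by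
    rw [← pow_add, ← pow_add]
    congr 1
    omega
  rw [norm_mul, norm_pow, Padic.norm_p] at hx
  rw [norm_div, norm_mul, norm_pow, Padic.norm_p, Padic.norm_factorial, hsplit,
    div_le_iff₀ (pow_pos hρ v)]
  calc (p : ℝ)⁻¹ ^ (k - m - v) * (p : ℝ)⁻¹ ^ m * (p : ℝ)⁻¹ ^ v * ‖x‖
      = (p : ℝ)⁻¹ ^ (k - m - v) * ((p : ℝ)⁻¹ ^ m * ‖x‖) * (p : ℝ)⁻¹ ^ v := by ring
    _ ≤ (p : ℝ)⁻¹ ^ (k - m - v) * r * (p : ℝ)⁻¹ ^ v := by gcongr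

theorem Padic.norm_pow_pred_mul_le {d : ℕ} {w : ℕ → ℤ}
    (hspan : ∀ k, ∃ e : Fin d → ℤ, w k = ∑ j, e j * w j) {r : ℝ} (hr0 : 0 ≤ r)
    (hr : ∀ j < d, ‖(p : ℚ_[p]) ^ j * w j‖ ≤ r) (k : ℕ) :
    ‖(p : ℚ_[p]) ^ (d - 1) * w k‖ ≤ r := by
  have hlow : ∀ j < d, ‖(p : ℚ_[p]) ^ (d - 1) * w j‖ ≤ r := fun j hj => by
    obtain ⟨i, hi⟩ : ∃ i, d - 1 = i + j := ⟨d - 1 - j, by omega⟩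
    rw [hi, pow_add, mul_assoc, norm_mul]
    refine (mul_le_of_le_one_left (norm_nonneg _) ?_).trans (hr j hj)
    rw [norm_pow, Padic.norm_p]
    exact pow_le_one₀ (by positivity) (inv_le_one_of_one_le₀ (by exact_mod_cast hp.out.one_le))
  obtain ⟨e, he⟩ := hspan k
  rw [he, Int.cast_sum, mul_sum]
  refine IsUltrametricDist.norm_sum_le_of_forall_le_of_nonneg hr0 fun j _ => ?_
  rw [Int.cast_mul, mul_left_comm, norm_mul]
  exact (mul_le_of_le_one_left (norm_nonneg _) (Padic.norm_int_le_one _)).trans (hlow j j.isLt)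

theorem padicValNat_factorial_mul_le {d : ℕ} (hpd : d + 1 < p) (k : ℕ) :
    (d + 1) * padicValNat p k ! ≤ k := by
  have := sub_one_mul_padicValNat_factorial (p := p) k
  calc (d + 1) * padicValNat p k ! ≤ (p - 1) * padicValNat p k ! := by gcongr; omega
    _ ≤ k := by omega

theorem padicValNat_factorial_le_sub {d : ℕ} (hpd : d + 1 < p) (k : ℕ) :
    padicValNat p k ! ≤ k - d := by
  have h := padicValNat_factorial_mul_le hpd k
  rcases Nat.eq_zero_or_pos (padicValNat p k !) with h0 | h0
  · omega
  · have : d * 1 ≤ d * padicValNat p k ! := Nat.mul_le_mul_left d h0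
    rw [add_mul, one_mul] at h
    omega

theorem Padic.tendsto_zero_of_norm_le_pow_sub_padicValNat_factorial (hp2 : 2 < p)
    {τ : ℕ → ℚ_[p]} {m : ℕ} {r : ℝ} (hr : 0 ≤ r)
    (h : ∀ᶠ k in atTop, ‖τ k‖ ≤ (p : ℝ)⁻¹ ^ (k - m - padicValNat p k !) * r) :
    Tendsto τ atTop (𝓝 0) := by
  have hρ0 : (0 : ℝ) ≤ (p : ℝ)⁻¹ := by positivity
  have hρ1 : (p : ℝ)⁻¹ < 1 := inv_lt_one_of_one_lt₀ (by exact_mod_cast hp.out.one_lt)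
  refine squeeze_zero_norm' (a := fun k => (p : ℝ)⁻¹ ^ (k / 2 - m) * r)
    (h.mono fun k hk => hk.trans ?_) ?_
  · have := padicValNat_factorial_mul_le (d := 1) hp2 k
    exact mul_le_mul_of_nonneg_right (pow_le_pow_of_le_one hρ0 hρ1.le (by omega)) hr
  · simpa using ((tendsto_pow_atTop_nhds_zero_of_lt_one hρ0 hρ1).comp
      (tendsto_atTop_atTop.2 fun b => ⟨2 * (b + m), fun k hk => by omega⟩)).mul_const r

theorem Padic.encard_zerosInClosedUnitBall_le {c : ℕ → ℚ_[p]} (hc : Tendsto c atTop (𝓝 0))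
    {d : ℕ} {r : ℝ} (hle : ∀ j, ‖c j‖ ≤ r) (hex : ∃ j < d, ‖c j‖ = r)
    (htail : ∀ j, d ≤ j → ‖c j‖ < r) :
    (zerosInClosedUnitBall c).encard ≤ d - 1 := by
  classical
  obtain ⟨j, hjd, hj⟩ := hex
  set N := Nat.findGreatest (fun j => ‖c j‖ = r) (d - 1)
  have hN : ‖c N‖ = r := Nat.findGreatest_spec (P := fun j => ‖c j‖ = r) (m := j) (by omega) hj
  have hlt : ∀ j, N < j → ‖c j‖ < r := fun j hNj => (lt_or_ge j d).elim
    (fun h => (hle j).lt_of_ne (Nat.findGreatest_is_greatest (n := d - 1) hNj (by omega))) (htail j)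
  have hr : 0 < r := (norm_nonneg _).trans_lt (htail d le_rfl)
  refine (_root_.encard_zerosInClosedUnitBall_le N hc (hN ▸ hle)
    (fun j hj => Padic.norm_le_norm_div_of_norm_lt (hN ▸ hlt j hj)) ?_).trans
    (by exact_mod_cast Nat.findGreatest_le _)
  rw [hN]
  exact div_lt_self hr (by exact_mod_cast hp.out.one_lt)

theorem Padic.encard_setOf_sum_choose_mul_eq_zero_le {t : ℕ → ℚ_[p]} {d j₀ : ℕ} (ht : t j₀ ≠ 0)
    (hdecay : Tendsto (fun k => t k / (k ! : ℚ_[p])) atTop (𝓝 0))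
    (hle : ∀ k, ‖t k / (k ! : ℚ_[p])‖ ≤ ‖t j₀‖)
    (htail : ∀ k, d ≤ k → ‖t k / (k ! : ℚ_[p])‖ ≤ ‖t j₀‖ / p) :
    {n : ℕ | ∑ k ∈ range (n + 1), (n.choose k : ℚ_[p]) * t k = 0}.encard ≤ d - 1 := by
  set c := seriesCoeff (fun k => t k / (k ! : ℚ_[p])) (descPochhammer ℤ)
  have hP : ∀ k, (descPochhammer ℤ k).natDegree ≤ k := fun k => (descPochhammer_natDegree ℤ k).le
  have hr : 0 < ‖t j₀‖ := norm_pos_iff.2 ht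
  have hcle : ∀ j, ‖c j‖ ≤ ‖t j₀‖ := fun j => norm_seriesCoeff_le hP hr.le fun k _ => hle k
  have hctail : ∀ j, d ≤ j → ‖c j‖ ≤ ‖t j₀‖ / p := fun j hj =>
    norm_seriesCoeff_le hP (by positivity) fun k hk => htail k (hj.trans hk)
  have hnat : ∀ n : ℕ, ‖(n : ℚ_[p])‖ ≤ 1 := IsUltrametricDist.norm_natCast_le_one _
  have hval : ∀ n : ℕ, ∑' j, c j * (n : ℚ_[p]) ^ j
      = ∑ k ∈ range (n + 1), (n.choose k : ℚ_[p]) * t k := fun n =>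
    (tsum_seriesCoeff_mul_pow hdecay hP (hnat n)).trans
      (tsum_div_factorial_mul_aeval_descPochhammer t n)
  -- otherwise every coefficient, hence every value `∑ C(n, k) t k`, and by binomial inversion
  -- every `t k`, would have norm at most `‖t j₀‖ / p`
  have hex : ∃ j < d, ‖c j‖ = ‖t j₀‖ := by
    by_contra! h
    have hsmall : ∀ j, ‖c j‖ ≤ ‖t j₀‖ / p := fun j => (lt_or_ge j d).elim
      (fun hj => Padic.norm_le_norm_div_of_norm_lt ((hcle j).lt_of_ne (h j hj))) (hctail j)
    have := norm_le_of_forall_norm_sum_choose_mul_le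
      (fun n => hval n ▸ norm_tsum_mul_pow_le (hnat n) (by positivity) hsmall) j₀
    exact this.not_gt (div_lt_self hr (by exact_mod_cast hp.out.one_lt))
  calc {n : ℕ | ∑ k ∈ range (n + 1), (n.choose k : ℚ_[p]) * t k = 0}.encard
      = (Nat.cast '' {n : ℕ | ∑ k ∈ range (n + 1), (n.choose k : ℚ_[p]) * t k = 0}).encard :=
        (Nat.cast_injective.encard_image _).symm
    _ ≤ (zerosInClosedUnitBall c).encard :=
        Set.encard_le_encard (Set.image_subset_iff.2 fun n hn => ⟨hnat n, (hval n).trans hn⟩)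
    _ ≤ d - 1 := Padic.encard_zerosInClosedUnitBall_le (tendsto_seriesCoeff hdecay hP) hcle hex
        fun j hj => (hctail j hj).trans_lt (div_lt_self hr (by exact_mod_cast hp.out.one_lt))

theorem encard_setOf_sum_choose_mul_pow_mul_eq_zero_le {d : ℕ}
    (hpd : d + 1 < p) {w : ℕ → ℤ} (hspan : ∀ k, ∃ e : Fin d → ℤ, w k = ∑ j, e j * w j)
    (hw : ∃ j < d, w j ≠ 0) :
    {n : ℕ | ∑ k ∈ range (n + 1), (n.choose k : ℤ) * (p ^ k * w k) = 0}.encard ≤ d - 1 := by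
  obtain ⟨j₁, hj₁, hwj₁⟩ := hw
  set t : ℕ → ℚ_[p] := fun k => (p : ℚ_[p]) ^ k * w k
  set ρ : ℝ := (p : ℝ)⁻¹
  obtain ⟨j₀, -, hmax⟩ := (range d).exists_max_image (‖t ·‖) ⟨j₁, mem_range.2 hj₁⟩
  have ht : t j₀ ≠ 0 := norm_pos_iff.1 <| (norm_pos_iff.2 <| mul_ne_zero
    (pow_ne_zero _ (by exact_mod_cast hp.out.ne_zero)) (by exact_mod_cast hwj₁)).trans_le
    (hmax j₁ (mem_range.2 hj₁))
  have hρ : 0 ≤ ρ ∧ ρ < 1 :=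
    ⟨by positivity, inv_lt_one_of_one_lt₀ (by exact_mod_cast hp.out.one_lt)⟩
  have hv : ∀ k, padicValNat p k ! ≤ k - d := padicValNat_factorial_le_sub hpd
  have hbound : ∀ k, d ≤ k →
      ‖t k / (k ! : ℚ_[p])‖ ≤ ρ ^ (k - (d - 1) - padicValNat p k !) * ‖t j₀‖ := fun k hk =>
    Padic.norm_pow_mul_div_factorial_le (Padic.norm_pow_pred_mul_le hspan (norm_nonneg _)
      (fun j hj => hmax j (mem_range.2 hj)) k) (by have := hv k; omega)
  have hlow : ∀ k < d, ‖t k / (k ! : ℚ_[p])‖ ≤ ‖t j₀‖ := fun k hk => by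
    have : padicValNat p k ! = 0 := by have := hv k; omega
    rw [norm_div, Padic.norm_factorial, this, pow_zero, div_one]
    exact hmax k (mem_range.2 hk)
  have hdecay : Tendsto (fun k => t k / (k ! : ℚ_[p])) atTop (𝓝 0) :=
    Padic.tendsto_zero_of_norm_le_pow_sub_padicValNat_factorial (by omega) (norm_nonneg _)
      (eventually_atTop.2 ⟨d, hbound⟩)
  have hmain := Padic.encard_setOf_sum_choose_mul_eq_zero_le ht hdecay
    (fun k => (lt_or_ge k d).elim (hlow k) fun hk => (hbound k hk).trans
      (mul_le_of_le_one_left (norm_nonneg _) (pow_le_one₀ hρ.1 hρ.2.le)))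
    (fun k hk => (hbound k hk).trans <| by
      rw [div_eq_inv_mul]
      refine mul_le_mul_of_nonneg_right ?_ (norm_nonneg _)
      exact (pow_le_pow_of_le_one hρ.1 hρ.2.le
        (show 1 ≤ k - (d - 1) - padicValNat p k ! by have := hv k; omega)).trans_eq (pow_one ρ))
  have hcast : ∀ n : ℕ, ((∑ k ∈ range (n + 1), (n.choose k : ℤ) * (p ^ k * w k) : ℤ) : ℚ_[p])
      = ∑ k ∈ range (n + 1), (n.choose k : ℚ_[p]) * t k := fun n => by push_cast; rfl
  simpa only [← hcast, Int.cast_eq_zero] using hmain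

end Padic

section Companion

open Matrix

theorem Matrix.one_add_smul_pow_mulVec {R ι : Type*} [CommRing R] [Fintype ι] [DecidableEq ι]
    (c : R) (B : Matrix ι ι R) (x : ι → R) (n : ℕ) :
    (1 + c • B) ^ n *ᵥ x = ∑ k ∈ range (n + 1), (n.choose k * c ^ k) • (B ^ k *ᵥ x) := by
  rw [add_comm, (Commute.one_right _).add_pow, Matrix.sum_mulVec]
  refine sum_congr rfl fun k _ => ?_
  rw [one_pow, mul_one, _root_.smul_pow, ← mulVec_mulVec, natCast_mulVec,
    mulVec_smul, smul_mulVec, smul_smul, mul_comm]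

theorem Matrix.exists_eq_one_add_smul_of_dvd {R ι : Type*} [CommRing R] [DecidableEq ι]
    {A : Matrix ι ι R} {c : R} (h : ∀ i j, c ∣ (A - 1) i j) : ∃ B, A = 1 + c • B := by
  choose B hB using h
  refine ⟨Matrix.of B, ?_⟩
  ext i j
  simp [← hB]

theorem Matrix.exists_pow_eq_sum_smul_pow {R : Type*} [CommRing R] [Nontrivial R] {d : ℕ}
    (B : Matrix (Fin d) (Fin d) R) (k : ℕ) :
    ∃ e : Fin d → R, B ^ k = ∑ j : Fin d, e j • B ^ (j : ℕ) := by
  refine ⟨fun j => (X ^ k %ₘ B.charpoly).coeff j, ?_⟩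
  have hdeg : (X ^ k %ₘ B.charpoly).degree < d := by
    simpa [B.charpoly_degree_eq_dim] using degree_modByMonic_lt (X ^ k) B.charpoly_monic
  rw [B.pow_eq_aeval_mod_charpoly, aeval_def, eval₂_eq_sum, ← sum_fin _ (by simp) hdeg]
  simp [Algebra.smul_def]

theorem Matrix.exists_pow_mulVec_apply_eq_sum {R : Type*} [CommRing R] [Nontrivial R] {d : ℕ}
    (B : Matrix (Fin d) (Fin d) R) (x : Fin d → R) (i : Fin d) (k : ℕ) :
    ∃ e : Fin d → R, (B ^ k *ᵥ x) i = ∑ j : Fin d, e j * (B ^ (j : ℕ) *ᵥ x) i := by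
  obtain ⟨e, he⟩ := B.exists_pow_eq_sum_smul_pow k
  refine ⟨e, ?_⟩
  simp only [he, sum_mulVec, Finset.sum_apply, smul_mulVec, Pi.smul_apply, smul_eq_mul]

variable {d : ℕ} (a : Fin d → ℤ) {u : ℕ → ℤ}

theorem companionMatrix_mulVec (hrec : ∀ n : ℕ, u (n + d) = ∑ i : Fin d, a i * u (n + i))
    (m : ℕ) :
    companionMatrix a *ᵥ (fun i => u (m + i.rev)) = fun i => u (m + 1 + i.rev) := by
  funext i
  simp only [mulVec, dotProduct, companionMatrix, of_apply]
  by_cases hi : (i : ℕ) = 0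
  · simp only [hi, if_true]
    rw [show m + 1 + (i.rev : ℕ) = m + d by rw [Fin.val_rev]; omega, hrec]
    exact Fintype.sum_equiv Fin.revPerm _ _ fun j => by simp
  · simp only [hi, if_false, ite_mul, one_mul, zero_mul]
    rw [sum_eq_single ⟨i - 1, by omega⟩
      (fun j _ hj => if_neg fun h => hj (Fin.ext (by simp; omega))) (by simp)]
    simp only [if_pos (show i - 1 + 1 = (i : ℕ) by omega)]
    congr 1
    simp only [Fin.val_rev]
    omega

theorem companionMatrix_pow_mulVec (hrec : ∀ n : ℕ, u (n + d) = ∑ i : Fin d, a i * u (n + i))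
    (n m : ℕ) :
    companionMatrix a ^ n *ᵥ (fun i => u (m + i.rev)) = fun i => u (m + n + i.rev) := by
  induction n generalizing m with
  | zero => simp
  | succ n ih =>
    rw [pow_succ, ← mulVec_mulVec, companionMatrix_mulVec a hrec, ih]
    simp only [add_assoc, add_comm 1]

theorem eq_sum_choose_of_companionMatrix_pow_eq_one_add_smul (hrec : ∀ n : ℕ, u (n + d) = ∑ i : Fin d, a i * u (n + i))
    {M : ℕ} {c : ℤ} {B : Matrix (Fin d) (Fin d) ℤ} (hB : companionMatrix a ^ M = 1 + c • B)
    (ℓ n : ℕ) (i : Fin d) :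
    u (M * n + ℓ + i.rev) = ∑ k ∈ range (n + 1),
      (n.choose k : ℤ) * (c ^ k * (B ^ k *ᵥ fun i => u (ℓ + i.rev)) i) := by
  have := congrFun (companionMatrix_pow_mulVec a hrec (M * n) ℓ) i
  rw [pow_mul, hB, one_add_smul_pow_mulVec, Finset.sum_apply, add_comm ℓ] at this
  rw [← this]
  simp only [Pi.smul_apply, smul_eq_mul, mul_assoc]

end Companion

theorem lrs_subsequence_few_zeros_general (p d : ℕ) (hp : p.Prime) (hd : 0 < d)
    (hpd : d + 1 < p) (a : Fin d → ℤ) (u : ℕ → ℤ)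
    (hrec : ∀ n : ℕ, u (n + d) = ∑ i : Fin d, a i * u (n + i))
    (M : ℕ)
    (hAM : ∀ i j, (p : ℤ) ∣ ((companionMatrix a) ^ M - 1) i j) :
    ∀ ℓ < M, (∀ n : ℕ, u (M * n + ℓ) = 0) ∨
      ({n : ℕ | u (M * n + ℓ) = 0}.Finite ∧
        {n : ℕ | u (M * n + ℓ) = 0}.ncard ≤ d - 1) := by
  intro ℓ _
  have : Fact p.Prime := ⟨hp⟩
  obtain ⟨B, hB⟩ := Matrix.exists_eq_one_add_smul_of_dvd hAM
  set last : Fin d := ⟨d - 1, by omega⟩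
  have hlast : (last.rev : ℕ) = 0 := by simp only [last, Fin.val_rev]; omega
  set w : ℕ → ℤ := fun k => (B ^ k).mulVec (fun i => u (ℓ + i.rev)) last
  have hu : ∀ n, u (M * n + ℓ) = ∑ k ∈ range (n + 1), (n.choose k : ℤ) * (p ^ k * w k) :=
    fun n => by simpa only [hlast, add_zero] using eq_sum_choose_of_companionMatrix_pow_eq_one_add_smul a hrec hB ℓ n last
  have hspan : ∀ k, ∃ e : Fin d → ℤ, w k = ∑ j, e j * w j :=
    B.exists_pow_mulVec_apply_eq_sum _ last
  by_cases hw : ∃ j < d, w j ≠ 0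
  · right
    simp_rw [hu]
    exact Set.encard_le_coe_iff_finite_ncard_le.1
      (encard_setOf_sum_choose_mul_pow_mul_eq_zero_le hpd hspan hw)
  · left
    push Not at hw
    have hw0 : ∀ k, w k = 0 := fun k => by
      obtain ⟨e, he⟩ := hspan k
      simp [he, fun j : Fin d => hw j j.isLt]
    simp [hu, hw0]

/-- Let `u` satisfy an order-`d` integer linear recurrence, `p > d+1` a prime
not dividing `a_0`, `A` the companion matrix and `M > 0` with `A^M ≡ I (mod p)`.  Then for every
`ℓ < M`, either `u (M*n+ℓ) = 0` for all `n`, or `{n : u (M*n+ℓ) = 0}` has at most `d − 1`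
elements. -/
theorem lrs_subsequence_few_zeros (p d : ℕ) (hp : p.Prime) (hd : 0 < d)
    (hpd : d + 1 < p) (a : Fin d → ℤ) (u : ℕ → ℤ)
    (hrec : ∀ n : ℕ, u (n + d) = ∑ i : Fin d, a i * u (n + i))
    (ha0 : ¬ ((p : ℤ) ∣ a ⟨0, hd⟩))
    (M : ℕ) (hM : 0 < M)
    (hAM : ∀ i j, (p : ℤ) ∣ ((companionMatrix a) ^ M - 1) i j) :
    ∀ ℓ < M, (∀ n : ℕ, u (M * n + ℓ) = 0) ∨
      ({n : ℕ | u (M * n + ℓ) = 0}.Finite ∧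
        {n : ℕ | u (M * n + ℓ) = 0}.ncard ≤ d - 1) :=
  lrs_subsequence_few_zeros_general p d hp hd hpd a u hrec M hAM
end
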